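/- Let 𝒴̃ ⊆ L^0(Ω,𝐅_T,P) be a vector subspace with ℝ^N_0 ⊆ 𝒴̃, let Y ∈ L^0(Ω,𝐅_T,P), and set 𝒴 := span(𝒴̃ ∪ {Y}). If NCA(𝒴) holds and K^𝒴̃ is closed under componentwise P-a.s. convergence of sequences, then K^𝒴 is closed under componentwise P-a.s. convergence of sequences. -/
import Mathlib


open MeasureTheory Filter Topology

namespace CollectiveArb

variable {Ω : Type*}

/-- Terminal gains `K_i` of admissible (predictable) strategies for an agent with
filtration `F`, trading the assets indexed by `A`, over times `1,…,T`. -/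
def gainsSet {J : ℕ} (F : ℕ → MeasurableSpace Ω) (T : ℕ)
    (A : Finset (Fin J)) (X : Fin J → ℕ → Ω → ℝ) : Set (Ω → ℝ) :=
  { g | ∃ H : Fin J → ℕ → Ω → ℝ,
      (∀ j ∈ A, ∀ s, 1 ≤ s → s ≤ T → Measurable[F (s - 1)] (H j s)) ∧
      g = fun ω => ∑ j ∈ A, ∑ s ∈ Finset.Icc 1 T, H j s ω * (X j s ω - X j (s - 1) ω) }

/-- No collective arbitrage for the gains sets `K` and the exchange set `Y`:
`(K₁ × ⋯ × K_N + Y) ∩ L⁰₊ = {0}`. -/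
def NCA {N : ℕ} [MeasurableSpace Ω] (P : Measure Ω)
    (K : Fin N → Set (Ω → ℝ)) (Y : Set (Fin N → Ω → ℝ)) : Prop :=
  ∀ k : Fin N → Ω → ℝ, ∀ y ∈ Y, (∀ i, k i ∈ K i) →
    (∀ i, ∀ᵐ ω ∂P, 0 ≤ k i ω + y i ω) →
    ∀ i, (fun ω => k i ω + y i ω) =ᵐ[P] fun _ => (0 : ℝ)

/-- `K^𝒴 = ⨉ᵢ (Kᵢ − L⁰₊(ℱᵢ_T)) + 𝒴`. -/
def KY {N : ℕ} [MeasurableSpace Ω] (P : Measure Ω)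
    (FT : Fin N → MeasurableSpace Ω)
    (K : Fin N → Set (Ω → ℝ)) (Y : Set (Fin N → Ω → ℝ)) : Set (Fin N → Ω → ℝ) :=
  { f | ∃ (k l y : Fin N → Ω → ℝ), y ∈ Y ∧ (∀ i, k i ∈ K i) ∧
      (∀ i, Measurable[FT i] (l i) ∧ (∀ᵐ ω ∂P, 0 ≤ l i ω)) ∧
      ∀ i, f i = fun ω => k i ω - l i ω + y i ω }

/-- `ℝ^N_0`: zero-sum deterministic exchanges, viewed as constant random vectors. -/
def zeroSum (Ω : Type*) (N : ℕ) : Set (Fin N → Ω → ℝ) :=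
  { y | ∃ x : Fin N → ℝ, (∑ i, x i) = 0 ∧ ∀ i, y i = fun _ => x i }

/-- `span(ℝ^N_0, Y_1, …, Y_R)`: the finite-dimensional space of exchanges generated
by `ℝ^N_0` and the random vectors `Ys 1, …, Ys R`. -/
def spanExch {N R : ℕ} (Ys : Fin R → Fin N → Ω → ℝ) : Set (Fin N → Ω → ℝ) :=
  { y | ∃ (x : Fin N → ℝ) (c : Fin R → ℝ), (∑ i, x i) = 0 ∧
      ∀ i, y i = fun ω => x i + ∑ r, c r * Ys r i ω }

/-- `span(𝒴₀ ∪ {g})` for a vector subspace `𝒴₀`. -/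
def spanWith {N : ℕ} (Y0 : Set (Fin N → Ω → ℝ)) (g : Fin N → Ω → ℝ) :
    Set (Fin N → Ω → ℝ) :=
  { y | ∃ w ∈ Y0, ∃ c : ℝ, ∀ i, y i = fun ω => w i ω + c * g i ω }

/-- Equivalent martingale measures `Mᵢₑ` for the assets in `A`, w.r.t. the filtration `F`. -/
def martMeasures {J : ℕ} [MeasurableSpace Ω] (P : Measure Ω)
    (F : ℕ → MeasurableSpace Ω) (T : ℕ) (A : Finset (Fin J))
    (X : Fin J → ℕ → Ω → ℝ) : Set (Measure Ω) :=
  { Q | IsProbabilityMeasure Q ∧ Q ≪ P ∧ P ≪ Q ∧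
      ∀ j ∈ A, (∀ t, t ≤ T → Integrable (X j t) Q) ∧
        ∀ s t, s ≤ t → t ≤ T → X j s =ᵐ[Q] Q[X j t | F s] }

/-- Equivalent collective martingale measures `ℳₑ(𝒴)`. -/
def MeY {J N : ℕ} [MeasurableSpace Ω] (P : Measure Ω)
    (F : Fin N → ℕ → MeasurableSpace Ω) (T : ℕ) (assets : Fin N → Finset (Fin J))
    (X : Fin J → ℕ → Ω → ℝ) (Y : Set (Fin N → Ω → ℝ)) : Set (Fin N → Measure Ω) :=
  { Q | (∀ i, Q i ∈ martMeasures P (F i) T (assets i) X) ∧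
      (∀ y ∈ Y, ∀ i, Integrable (y i) (Q i)) ∧
      ∀ y ∈ Y, (∑ i, ∫ ω, y i ω ∂(Q i)) ≤ 0 }

/-- `ℳ^φ_e(𝒴) = {Q ∈ ℳₑ(𝒴) : E_{Qⁱ}[|φⁱ|] < ∞ ∀ i}`. -/
def MeYphi {J N : ℕ} [MeasurableSpace Ω] (P : Measure Ω)
    (F : Fin N → ℕ → MeasurableSpace Ω) (T : ℕ) (assets : Fin N → Finset (Fin J))
    (X : Fin J → ℕ → Ω → ℝ) (Y : Set (Fin N → Ω → ℝ))
    (φ : Fin N → Ω → ℝ) : Set (Fin N → Measure Ω) :=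
  { Q | Q ∈ MeY P F T assets X Y ∧ ∀ i, Integrable (φ i) (Q i) }

/-- Closedness of a set of random vectors under componentwise `P`-a.s. convergence
of sequences (within `L⁰(Ω, 𝐅_T, P)`). -/
def ClosedAS {N : ℕ} [MeasurableSpace Ω] (P : Measure Ω)
    (FT : Fin N → MeasurableSpace Ω) (S : Set (Fin N → Ω → ℝ)) : Prop :=
  ∀ (f : ℕ → Fin N → Ω → ℝ) (g : Fin N → Ω → ℝ),
    (∀ n, f n ∈ S) → (∀ i, Measurable[FT i] (g i)) →
    (∀ i, ∀ᵐ ω ∂P, Tendsto (fun n => f n i ω) atTop (𝓝 (g i ω))) →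
    g ∈ S

/-- Collective superhedging price `ρ^𝒴₊(f)` (with `inf ∅ = +∞`). -/
noncomputable def rhoPlus {N : ℕ} [MeasurableSpace Ω] (P : Measure Ω)
    (K : Fin N → Set (Ω → ℝ)) (Y : Set (Fin N → Ω → ℝ))
    (f : Fin N → Ω → ℝ) : EReal :=
  sInf { z : EReal | ∃ m : Fin N → ℝ, z = ((∑ i, m i : ℝ) : EReal) ∧
      ∃ k : Fin N → Ω → ℝ, (∀ i, k i ∈ K i) ∧ ∃ y ∈ Y,
        ∀ i, ∀ᵐ ω ∂P, f i ω ≤ m i + k i ω + y i ω }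

/-- Collective subhedging price `ρ^𝒴₋(f)` (with `sup ∅ = −∞`). -/
noncomputable def rhoMinus {N : ℕ} [MeasurableSpace Ω] (P : Measure Ω)
    (K : Fin N → Set (Ω → ℝ)) (Y : Set (Fin N → Ω → ℝ))
    (f : Fin N → Ω → ℝ) : EReal :=
  sSup { z : EReal | ∃ m : Fin N → ℝ, z = ((∑ i, m i : ℝ) : EReal) ∧
      ∃ k : Fin N → Ω → ℝ, (∀ i, k i ∈ K i) ∧ ∃ y ∈ Y,
        ∀ i, ∀ᵐ ω ∂P, m i + k i ω - y i ω ≤ f i ω }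

/-- `ρ^𝒴₊(f)` is attained. -/
def rhoPlusAttained {N : ℕ} [MeasurableSpace Ω] (P : Measure Ω)
    (K : Fin N → Set (Ω → ℝ)) (Y : Set (Fin N → Ω → ℝ))
    (f : Fin N → Ω → ℝ) : Prop :=
  ∃ (m : Fin N → ℝ) (k y : Fin N → Ω → ℝ), y ∈ Y ∧ (∀ i, k i ∈ K i) ∧
    (∀ i, ∀ᵐ ω ∂P, f i ω ≤ m i + k i ω + y i ω) ∧
    rhoPlus P K Y f = ((∑ i, m i : ℝ) : EReal)

/-- `ρ^𝒴₋(f)` is attained. -/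
def rhoMinusAttained {N : ℕ} [MeasurableSpace Ω] (P : Measure Ω)
    (K : Fin N → Set (Ω → ℝ)) (Y : Set (Fin N → Ω → ℝ))
    (f : Fin N → Ω → ℝ) : Prop :=
  ∃ (m : Fin N → ℝ) (k y : Fin N → Ω → ℝ), y ∈ Y ∧ (∀ i, k i ∈ K i) ∧
    (∀ i, ∀ᵐ ω ∂P, m i + k i ω - y i ω ≤ f i ω) ∧
    rhoMinus P K Y f = ((∑ i, m i : ℝ) : EReal)

/-- `f` is `𝒴`-collectively replicable: `f ∈ ℝ^N + (K₁ × ⋯ × K_N) + 𝒴` in `L⁰`. -/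
def Replicable {N : ℕ} [MeasurableSpace Ω] (P : Measure Ω)
    (K : Fin N → Set (Ω → ℝ)) (Y : Set (Fin N → Ω → ℝ))
    (f : Fin N → Ω → ℝ) : Prop :=
  ∃ (m : Fin N → ℝ) (k y : Fin N → Ω → ℝ), y ∈ Y ∧ (∀ i, k i ∈ K i) ∧
    ∀ i, f i =ᵐ[P] fun ω => m i + k i ω + y i ω


/-- Linear combinations of gains are gains. -/
lemma gainsSet_comb {Ω : Type*} {J : ℕ} {F : ℕ → MeasurableSpace Ω} {T : ℕ}
    {A : Finset (Fin J)} {X : Fin J → ℕ → Ω → ℝ} {k k' : Ω → ℝ}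
    (hk : k ∈ gainsSet F T A X) (hk' : k' ∈ gainsSet F T A X) (a b : ℝ) :
    (fun ω => a * k ω + b * k' ω) ∈ gainsSet F T A X := by
  obtain ⟨H, hH, rfl⟩ := hk
  obtain ⟨H', hH', rfl⟩ := hk'
  refine ⟨fun j s ω => a * H j s ω + b * H' j s ω, ?_, ?_⟩
  · intro j hj s h1 h2
    exact ((hH j hj s h1 h2).const_mul a).add ((hH' j hj s h1 h2).const_mul b)
  · funext ω
    simp only [Finset.mul_sum, ← Finset.sum_add_distrib]
    refine Finset.sum_congr rfl fun j _ => Finset.sum_congr rfl fun s _ => by ring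

lemma gainsSet_smul {Ω : Type*} {J : ℕ} {F : ℕ → MeasurableSpace Ω} {T : ℕ}
    {A : Finset (Fin J)} {X : Fin J → ℕ → Ω → ℝ} {k : Ω → ℝ}
    (hk : k ∈ gainsSet F T A X) (a : ℝ) :
    (fun ω => a * k ω) ∈ gainsSet F T A X := by
  have := gainsSet_comb hk hk a 0
  simpa using this

lemma gainsSet_sub_smul {Ω : Type*} {J : ℕ} {F : ℕ → MeasurableSpace Ω} {T : ℕ}
    {A : Finset (Fin J)} {X : Fin J → ℕ → Ω → ℝ} {k k' : Ω → ℝ}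
    (hk : k ∈ gainsSet F T A X) (hk' : k' ∈ gainsSet F T A X) (a : ℝ) :
    (fun ω => k ω - a * k' ω) ∈ gainsSet F T A X := by
  have := gainsSet_comb hk hk' 1 (-a)
  simpa [sub_eq_add_neg, neg_mul] using this


/-- closedness of K^𝒴 is preserved when adding one exchange vector (Lemma closure+Y). -/
theorem KY_closed_span_insert
    {Ω : Type*} [m0 : MeasurableSpace Ω]
    (P : Measure Ω) [IsProbabilityMeasure P]
    (T J N : ℕ) (hT : 1 ≤ T) (hJ : 1 ≤ J) (hN : 1 ≤ N)
    (F : Fin N → ℕ → MeasurableSpace Ω)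
    (hFmono : ∀ i, Monotone (F i))
    (hFle : ∀ i t, F i t ≤ m0)
    (hFzero : ∀ i, ∀ A : Set Ω, MeasurableSet[F i 0] A → P A = 0 ∨ P A = 1)
    (X : Fin J → ℕ → Ω → ℝ)
    (assets : Fin N → Finset (Fin J))
    (hassets : ∀ i, (assets i).Nonempty)
    (hcover : ∀ j, ∃ i, j ∈ assets i)
    (hadapted : ∀ i, ∀ j ∈ assets i, ∀ t, t ≤ T → Measurable[F i t] (X j t))
    (𝒴t : Set (Fin N → Ω → ℝ))
    (h𝒴tmeas : ∀ y ∈ 𝒴t, ∀ i, Measurable[F i T] (y i))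
    (h𝒴tR0 : zeroSum Ω N ⊆ 𝒴t)
    (h𝒴tadd : ∀ y ∈ 𝒴t, ∀ z ∈ 𝒴t, (fun i ω => y i ω + z i ω) ∈ 𝒴t)
    (h𝒴tsmul : ∀ y ∈ 𝒴t, ∀ c : ℝ, (fun i ω => c * y i ω) ∈ 𝒴t)
    (Y : Fin N → Ω → ℝ) (hYmeas : ∀ i, Measurable[F i T] (Y i))
    (hNCA : NCA P (fun i => gainsSet (F i) T (assets i) X) (spanWith 𝒴t Y))
    (hclosed : ClosedAS P (fun i => F i T)
      (KY P (fun i => F i T) (fun i => gainsSet (F i) T (assets i) X) 𝒴t)) :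
    ClosedAS P (fun i => F i T)
      (KY P (fun i => F i T) (fun i => gainsSet (F i) T (assets i) X) (spanWith 𝒴t Y)) := by
  intro f g hf hg hconv
  classical
  set K : Fin N → Set (Ω → ℝ) := fun i => gainsSet (F i) T (assets i) X with hK
  -- extract decompositions
  choose k l y hy hk hl heq using hf
  choose w hw c hyc using hy
  -- basic pointwise identities
  have hfp : ∀ n i ω, f n i ω = k n i ω - l n i ω + y n i ω := fun n i ω =>
    congrFun (heq n i) ω
  have hyp : ∀ n i ω, y n i ω = w n i ω + c n * Y i ω := fun n i ω =>
    congrFun (hyc n i) ω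
  by_cases hb : ∃ B : ℝ, ∃ᶠ n in atTop, |c n| ≤ B
  · -- bounded case
    obtain ⟨B, hB⟩ := hb
    obtain ⟨φ, hφ, hφB⟩ := Filter.extraction_of_frequently_atTop hB
    have hmem : ∀ n, c (φ n) ∈ Set.Icc (-B) B := fun n => by
      have := abs_le.mp (hφB n); exact ⟨this.1, this.2⟩
    obtain ⟨c₀, _, ψ, hψ, hcc⟩ := isCompact_Icc.tendsto_subseq hmem
    set σ : ℕ → ℕ := φ ∘ ψ with hσ
    have hσmono : StrictMono σ := hφ.comp hψ
    set seq : ℕ → Fin N → Ω → ℝ := fun n i ω => f (σ n) i ω - c (σ n) * Y i ω with hseq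
    have hmemKY : ∀ n, seq n ∈ KY P (fun i => F i T) K 𝒴t := by
      intro n
      refine ⟨k (σ n), l (σ n), w (σ n), hw (σ n), hk (σ n), hl (σ n), fun i => ?_⟩
      funext ω
      have h1 := hfp (σ n) i ω
      have h2 := hyp (σ n) i ω
      show f (σ n) i ω - c (σ n) * Y i ω = _
      linarith
    have hgYmeas : ∀ i, Measurable[F i T] (fun ω => g i ω - c₀ * Y i ω) :=
      fun i => (hg i).sub ((hYmeas i).const_mul c₀)
    have hconv' : ∀ i, ∀ᵐ ω ∂P,
        Tendsto (fun n => seq n i ω) atTop (𝓝 (g i ω - c₀ * Y i ω)) := by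
      intro i
      filter_upwards [hconv i] with ω hω
      have h1 : Tendsto (fun n => f (σ n) i ω) atTop (𝓝 (g i ω)) :=
        hω.comp hσmono.tendsto_atTop
      have h2 : Tendsto (fun n => c (σ n) * Y i ω) atTop (𝓝 (c₀ * Y i ω)) :=
        hcc.mul_const (Y i ω)
      exact h1.sub h2
    obtain ⟨k', l', w', hw', hk', hl', heq'⟩ :=
      hclosed seq (fun i ω => g i ω - c₀ * Y i ω) hmemKY hgYmeas hconv'
    refine ⟨k', l', fun i ω => w' i ω + c₀ * Y i ω, ⟨w', hw', c₀, fun i => rfl⟩,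
      hk', hl', fun i => ?_⟩
    funext ω
    have h1 := congrFun (heq' i) ω
    simp only at h1
    show g i ω = k' i ω - l' i ω + (w' i ω + c₀ * Y i ω)
    linarith
  · -- unbounded case
    have h2 : ∀ B : ℝ, ∀ᶠ n in atTop, B < |c n| := by
      intro B
      have := not_exists.mp hb B
      rw [Filter.not_frequently] at this
      simpa [not_le] using this
    obtain ⟨ε, hε, φ, hφ, hsg⟩ : ∃ ε : ℝ, (ε = 1 ∨ ε = -1) ∧
        ∃ φ : ℕ → ℕ, StrictMono φ ∧ ∀ n, 1 ≤ ε * c (φ n) := by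
      by_cases hpos : ∃ᶠ n in atTop, 1 ≤ c n
      · obtain ⟨φ, hφ, hs⟩ := Filter.extraction_of_frequently_atTop hpos
        exact ⟨1, Or.inl rfl, φ, hφ, fun n => by simpa using hs n⟩
      · have hlt : ∀ᶠ n in atTop, c n < 1 := by
          rw [Filter.not_frequently] at hpos
          simpa [not_le] using hpos
        have hev : ∀ᶠ n in atTop, 1 ≤ -c n := by
          filter_upwards [hlt, h2 1] with n ha hb'
          rcases lt_abs.mp hb' with h | h
          · linarith
          · linarith
        obtain ⟨φ, hφ, hs⟩ := Filter.extraction_of_frequently_atTop hev.frequently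
        exact ⟨-1, Or.inr rfl, φ, hφ, fun n => by simpa [neg_mul] using hs n⟩
    have hεsq : ε * ε = 1 := by rcases hε with rfl | rfl <;> norm_num
    have hεc_pos : ∀ n, (0:ℝ) < ε * c (φ n) := fun n => lt_of_lt_of_le one_pos (hsg n)
    have habs : Tendsto (fun n => |c n|) atTop atTop :=
      tendsto_atTop.2 fun B => (h2 B).mono fun n h => h.le
    have heabs : ∀ n, ε * c (φ n) = |c (φ n)| := by
      intro n
      rcases hε with rfl | rfl
      · rw [one_mul]; exact (abs_of_pos (by linarith [hsg n])).symm
      · rw [neg_one_mul]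
        exact (abs_of_neg (by nlinarith [hsg n])).symm
    have htop : Tendsto (fun n => ε * c (φ n)) atTop atTop :=
      ((habs.comp hφ.tendsto_atTop).congr fun n => (heabs n).symm)
    have hinv : Tendsto (fun n => (ε * c (φ n))⁻¹) atTop (𝓝 0) :=
      tendsto_inv_atTop_zero.comp htop
    have hac : ∀ n, (ε * c (φ n))⁻¹ * c (φ n) = ε := by
      intro n
      have hne : ε * c (φ n) ≠ 0 := ne_of_gt (hεc_pos n)
      rw [inv_mul_eq_div, div_eq_iff hne]
      linear_combination (-(c (φ n))) * hεsq
    set seq2 : ℕ → Fin N → Ω → ℝ :=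
      fun n i ω => (ε * c (φ n))⁻¹ * f (φ n) i ω - ε * Y i ω with hseq2
    have hmem2 : ∀ n, seq2 n ∈ KY P (fun i => F i T) K 𝒴t := by
      intro n
      refine ⟨fun i ω => (ε * c (φ n))⁻¹ * k (φ n) i ω,
        fun i ω => (ε * c (φ n))⁻¹ * l (φ n) i ω,
        fun i ω => (ε * c (φ n))⁻¹ * w (φ n) i ω,
        h𝒴tsmul (w (φ n)) (hw (φ n)) _,
        fun i => gainsSet_smul (hk (φ n) i) _, fun i => ?_, fun i => ?_⟩
      · refine ⟨(hl (φ n) i).1.const_mul _, ?_⟩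
        filter_upwards [(hl (φ n) i).2] with ω hω
        exact mul_nonneg (inv_nonneg.2 (hεc_pos n).le) hω
      · funext ω
        have h1 := hfp (φ n) i ω
        have h2 := hyp (φ n) i ω
        have h3 := hac n
        show (ε * c (φ n))⁻¹ * f (φ n) i ω - ε * Y i ω = _
        linear_combination (ε * c (φ n))⁻¹ * h1 + (ε * c (φ n))⁻¹ * h2 + Y i ω * h3
    have hZmeas : ∀ i, Measurable[F i T] (fun ω => -(ε * Y i ω)) :=
      fun i => ((hYmeas i).const_mul ε).neg
    have hconv2 : ∀ i, ∀ᵐ ω ∂P,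
        Tendsto (fun n => seq2 n i ω) atTop (𝓝 (-(ε * Y i ω))) := by
      intro i
      filter_upwards [hconv i] with ω hω
      have h1 : Tendsto (fun n => (ε * c (φ n))⁻¹ * f (φ n) i ω) atTop (𝓝 (0 * g i ω)) :=
        hinv.mul (hω.comp hφ.tendsto_atTop)
      have h2' := h1.sub_const (ε * Y i ω)
      rw [hseq2]
      simpa only [zero_mul, zero_sub] using h2'
    obtain ⟨k₀, l₀, w₀, hw₀, hk₀, hl₀, heq₀⟩ :=
      hclosed seq2 (fun i ω => -(ε * Y i ω)) hmem2 hZmeas hconv2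
    have hZp : ∀ i ω, -(ε * Y i ω) = k₀ i ω - l₀ i ω + w₀ i ω := fun i ω =>
      congrFun (heq₀ i) ω
    -- apply NCA
    set y' : Fin N → Ω → ℝ := fun i ω => w₀ i ω + ε * Y i ω with hy'
    have hy'mem : y' ∈ spanWith 𝒴t Y := ⟨w₀, hw₀, ε, fun i => rfl⟩
    have hposk : ∀ i, ∀ᵐ ω ∂P, 0 ≤ k₀ i ω + y' i ω := by
      intro i
      filter_upwards [(hl₀ i).2] with ω hω
      have := hZp i ω
      show 0 ≤ k₀ i ω + (w₀ i ω + ε * Y i ω)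
      linarith
    have hzero := hNCA k₀ y' hy'mem hk₀ hposk
    have hl₀zero : ∀ i, ∀ᵐ ω ∂P, l₀ i ω = 0 := by
      intro i
      filter_upwards [hzero i] with ω hω
      have h3 := hZp i ω
      have hω' : k₀ i ω + (w₀ i ω + ε * Y i ω) = 0 := hω
      linarith
    -- pointwise identity for Y
    have hYid : ∀ i ω, Y i ω = ε * (l₀ i ω - k₀ i ω - w₀ i ω) := by
      intro i ω
      have h3 := hZp i ω
      linear_combination (-(Y i ω)) * hεsq + (-ε) * h3
    -- now the original sequence lies in KY 𝒴t
    have hfmem : ∀ n, f n ∈ KY P (fun i => F i T) K 𝒴t := by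
      intro n
      refine ⟨fun i ω => k n i ω - (c n * ε) * k₀ i ω,
        fun i ω => l n i ω - (c n * ε) * l₀ i ω,
        fun i ω => w n i ω + (-(c n * ε)) * w₀ i ω,
        h𝒴tadd (w n) (hw n) _ (h𝒴tsmul w₀ hw₀ (-(c n * ε))),
        fun i => gainsSet_sub_smul (hk n i) (hk₀ i) _, fun i => ?_, fun i => ?_⟩
      · refine ⟨(hl n i).1.sub ((hl₀ i).1.const_mul _), ?_⟩
        filter_upwards [(hl n i).2, hl₀zero i] with ω h1' h2'
        simp [h2', h1']
      · funext ω
        have h1 := hfp n i ω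
        have h2 := hyp n i ω
        have h3 := hYid i ω
        show f n i ω = _
        linear_combination h1 + h2 + c n * h3
    have hgmem := hclosed f g hfmem hg hconv
    obtain ⟨k', l', w', hw', hk', hl', heq'⟩ := hgmem
    refine ⟨k', l', w', ⟨w', hw', 0, fun i => ?_⟩, hk', hl', heq'⟩
    funext ω; simp

end CollectiveArb
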